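/- Let k ∈ ℝ, let w_A, w_B : ℝ → ℂ be C^∞ functions with w_A(x) + w_B(x) = x + k for all x, let s_A, s_B be antiderivatives of w_A, w_B with s_A(x) + s_B(x) = x²/2 + kx, let N_φ, N_Ψ be nonzero complex constants with N_φ·conj(N_Ψ) = e^{−k²/2}/√(2π), and set φ₀(x) = N_φ e^{−s_A(x)}, Ψ₀(x) = N_Ψ e^{−conj(s_B(x))}, φ_n = (1/√(n!)) Bⁿ φ₀, Ψ_n = (1/√(n!)) (A†)ⁿ Ψ₀, where (Bf)(x) = −f'(x) + w_B(x) f(x) and (A†f)(x) = −f'(x) + conj(w_A(x)) f(x). Then for all n, m ≥ 0 the product φ_n·conj(Ψ_m) belongs to L¹(ℝ) and ⟨Ψ_m, φ_n⟩ = ∫_ℝ conj(Ψ_m(x)) φ_n(x) dx = δ_{n,m} (Kronecker delta); i.e. the families {φ_n} and {Ψ_n} are biorthonormal. -/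

import Mathlib

open MeasureTheory Polynomial
open scoped ContDiff

lemma one_le_inf : (1 : WithTop ℕ∞) ≤ ∞ := by exact_mod_cast le_top

noncomputable section

/-- Gaussian weight. -/
def W (x : ℝ) : ℝ := Real.exp (-(x ^ 2 / 2))

/-- probabilists' Hermite polynomials over ℝ. -/
def He : ℕ → Polynomial ℝ
  | 0 => 1
  | n + 1 => X * He n - derivative (He n)

lemma He_derivative (n : ℕ) :
    derivative (He (n + 1)) = C ((n : ℝ) + 1) * He n := by
  induction n with
  | zero => simp [He]
  | succ n ih =>
      have h2 : He (n + 2) = X * He (n + 1) - derivative (He (n + 1)) := rfl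
      have h3 : He (n + 1) = X * He n - derivative (He n) := rfl
      rw [h2, derivative_sub, derivative_mul, derivative_X, one_mul, ih,
        derivative_mul, derivative_C, zero_mul, zero_add]
      rw [show derivative (He n) = X * He n - He (n + 1) by rw [h3]; ring]
      push_cast
      rw [show C ((n : ℝ) + 1 + 1) = C ((n : ℝ) + 1) + 1 by rw [C_add, C_1]]
      ring

lemma hasDerivAt_W (u : ℝ) : HasDerivAt W (-u * W u) u := by
  have h : HasDerivAt (fun x : ℝ => -(x ^ 2 / 2)) (-u) u := by
    simpa using (((hasDerivAt_pow 2 u).div_const 2).fun_neg)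
  show HasDerivAt (fun x => Real.exp (-(x ^ 2 / 2))) (-u * W u) u
  simpa [W, mul_comm] using h.exp

lemma hasDerivAt_HeW (n : ℕ) (u : ℝ) :
    HasDerivAt (fun t => (He n).eval t * W t) (-((He (n + 1)).eval u * W u)) u := by
  have h := ((He n).hasDerivAt u).mul (hasDerivAt_W u)
  have : (derivative (He n)).eval u * W u + (He n).eval u * (-u * W u)
      = -((He (n + 1)).eval u * W u) := by
    show _ = -((X * He n - derivative (He n)).eval u * W u)
    simp; ring
  rwa [this] at h

lemma integrable_pow_W (i : ℕ) : Integrable fun x : ℝ => x ^ i * W x := by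
  have h := integrable_rpow_mul_exp_neg_mul_sq (b := (1/2 : ℝ)) (by norm_num) (s := (i : ℝ))
    (lt_of_lt_of_le (by norm_num) (Nat.cast_nonneg i))
  refine h.congr (Filter.Eventually.of_forall fun x => ?_)
  show x ^ (i : ℝ) * Real.exp (-(1 / 2) * x ^ 2) = x ^ i * W x
  rw [Real.rpow_natCast]
  simp only [W]
  congr 2
  ring

lemma integrable_poly_W (p : Polynomial ℝ) : Integrable fun x : ℝ => p.eval x * W x := by
  have : ∀ x : ℝ, p.eval x * W x
      = ∑ i ∈ Finset.range (p.natDegree + 1), p.coeff i * (x ^ i * W x) := by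
    intro x
    rw [eval_eq_sum_range, Finset.sum_mul]
    simp [mul_assoc]
  simp only [this]
  exact integrable_finset_sum _ fun i _ => (integrable_pow_W i).const_mul _

lemma integrable_poly2_W (p q : Polynomial ℝ) :
    Integrable fun x : ℝ => p.eval x * (q.eval x * W x) := by
  refine (integrable_poly_W (p * q)).congr (Filter.Eventually.of_forall fun x => ?_)
  simp [eval_mul]; ring

lemma He_step (n m : ℕ) :
    ∫ x : ℝ, (He (n + 1)).eval x * ((He m).eval x * W x)
      = ∫ x : ℝ, (derivative (He m)).eval x * ((He n).eval x * W x) := by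
  have i1 : Integrable (fun x : ℝ => (He m).eval x * -((He (n + 1)).eval x * W x)) := by
    refine (integrable_poly2_W (He m) (He (n + 1))).neg.congr
      (Filter.Eventually.of_forall fun x => ?_)
    simp only [Pi.neg_apply]; ring
  have i2 : Integrable (fun x : ℝ => (derivative (He m)).eval x * ((He n).eval x * W x)) :=
    integrable_poly2_W _ _
  have i3 : Integrable (fun x : ℝ => (He m).eval x * ((He n).eval x * W x)) :=
    integrable_poly2_W _ _
  have h := MeasureTheory.integral_mul_deriv_eq_deriv_mul_of_integrable
    (u := fun x => (He m).eval x) (u' := fun x => (derivative (He m)).eval x)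
    (v := fun x => (He n).eval x * W x) (v' := fun x => -((He (n + 1)).eval x * W x))
    (fun x _ => (He m).hasDerivAt x) (fun x _ => hasDerivAt_HeW n x) i1 i2 i3
  calc ∫ x : ℝ, (He (n + 1)).eval x * ((He m).eval x * W x)
      = -∫ x : ℝ, (He m).eval x * -((He (n + 1)).eval x * W x) := by
        rw [← integral_neg]; congr 1; funext x; ring
    _ = ∫ x : ℝ, (derivative (He m)).eval x * ((He n).eval x * W x) := by
        rw [h, neg_neg]

lemma He_ortho (n : ℕ) : ∀ m : ℕ, (∫ x : ℝ, (He n).eval x * ((He m).eval x * W x))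
    = if n = m then Real.sqrt (2 * Real.pi) * n.factorial else 0 := by
  induction n with
  | zero =>
      intro m
      match m with
      | 0 =>
          simp only [He, eval_one, one_mul]
          rw [show (fun x : ℝ => W x) = fun x : ℝ => Real.exp (-(1/2) * x ^ 2) from
            funext fun x => by simp only [W]; congr 1; ring]
          rw [integral_gaussian, show (Real.pi / (1/2)) = 2 * Real.pi by ring]
          simp
      | m + 1 =>
          have : (∫ x : ℝ, (He 0).eval x * ((He (m + 1)).eval x * W x))
              = ∫ x : ℝ, (He (m + 1)).eval x * ((He 0).eval x * W x) := by
            congr 1; funext x; ring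
          rw [this, He_step m 0]
          simp [He]
  | succ n ih =>
      intro m
      match m with
      | 0 => rw [He_step n 0]; simp [He]
      | m + 1 =>
          rw [He_step n (m + 1), He_derivative m]
          have : (fun x : ℝ => (C ((m : ℝ) + 1) * He m).eval x * ((He n).eval x * W x))
              = fun x : ℝ => ((m : ℝ) + 1) * ((He n).eval x * ((He m).eval x * W x)) := by
            funext x; simp [eval_mul]; ring
          rw [this, integral_const_mul, ih m]
          by_cases hnm : n = m
          · subst hnm
            simp [Nat.factorial_succ]
            push_cast
            ring
          · simp [hnm, fun h => hnm (Nat.succ_injective h)]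

/-- The pseudo-bosonic raising operator `B = -d/dx + w_B`. -/
def opB (wB : ℝ → ℂ) (f : ℝ → ℂ) : ℝ → ℂ :=
  fun x => -deriv f x + wB x * f x

/-- The pseudo-bosonic raising operator `A† = -d/dx + conj w_A`. -/
def opAdag (wA : ℝ → ℂ) (f : ℝ → ℂ) : ℝ → ℂ :=
  fun x => -deriv f x + (starRingEnd ℂ) (wA x) * f x

lemma deriv_conj' (f : ℝ → ℂ) (x : ℝ) :
    deriv (fun t => (starRingEnd ℂ) (f t)) x = (starRingEnd ℂ) (deriv f x) := by
  by_cases hf : DifferentiableAt ℝ f x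
  · have h := Complex.conjCLE.hasFDerivAt.comp_hasDerivAt x hf.hasDerivAt
    simpa [Function.comp_def] using h.deriv
  · have hg : ¬ DifferentiableAt ℝ (fun t => (starRingEnd ℂ) (f t)) x := by
      intro h
      have h2 : DifferentiableAt ℝ (fun t => (starRingEnd ℂ) ((starRingEnd ℂ) (f t))) x :=
        (Complex.conjCLE.differentiable.differentiableAt).comp x h
      simp only [Complex.conj_conj] at h2
      exact hf h2
    rw [deriv_zero_of_not_differentiableAt hf, deriv_zero_of_not_differentiableAt hg, map_zero]

lemma conj_opAdag (wA : ℝ → ℂ) (f : ℝ → ℂ) :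
    (fun x => (starRingEnd ℂ) (opAdag wA f x)) = opB wA fun x => (starRingEnd ℂ) (f x) := by
  funext x
  simp only [opAdag, opB, map_add, map_neg, map_mul, Complex.conj_conj, deriv_conj' f x]

lemma conj_iter (wA : ℝ → ℂ) : ∀ (m : ℕ) (f : ℝ → ℂ) (x : ℝ),
    (starRingEnd ℂ) ((opAdag wA)^[m] f x)
      = (opB wA)^[m] (fun t => (starRingEnd ℂ) (f t)) x := by
  intro m
  induction m with
  | zero => intro f x; simp
  | succ m ih =>
      intro f x
      rw [Function.iterate_succ_apply, Function.iterate_succ_apply, ih (opAdag wA f) x,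
        conj_opAdag]

lemma iteratedDeriv_cmul (c : ℂ) : ∀ (n : ℕ) (f : ℝ → ℂ), ContDiff ℝ ∞ f → ∀ x : ℝ,
    iteratedDeriv n (fun t => c * f t) x = c * iteratedDeriv n f x := by
  intro n
  induction n with
  | zero => intro f hf x; simp
  | succ n ih =>
      intro f hf x
      rw [iteratedDeriv_succ', iteratedDeriv_succ']
      rw [show deriv (fun t => c * f t) = fun t => c * deriv f t from
        funext fun t => deriv_const_mul c ((hf.differentiable (by simp)) t)]
      exact ih (deriv f) ((contDiff_infty_iff_deriv.mp hf).2) x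

lemma opB_exp_mul (w s : ℝ → ℂ) (hs : ∀ x, HasDerivAt s (w x) x) (h : ℝ → ℂ)
    (hh : Differentiable ℝ h) :
    opB w (fun t => Complex.exp (s t) * h t) = fun t => Complex.exp (s t) * -deriv h t := by
  funext x
  have hd : HasDerivAt (fun t => Complex.exp (s t) * h t)
      (Complex.exp (s x) * w x * h x + Complex.exp (s x) * deriv h x) x :=
    ((hs x).cexp).mul (hh x).hasDerivAt
  simp only [opB, hd.deriv]
  ring

lemma iter_opB (w s : ℝ → ℂ) (hs : ∀ x, HasDerivAt s (w x) x) :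
    ∀ (n : ℕ) (h : ℝ → ℂ), ContDiff ℝ ∞ h →
      (opB w)^[n] (fun t => Complex.exp (s t) * h t)
        = fun t => Complex.exp (s t) * ((-1 : ℂ) ^ n * iteratedDeriv n h t) := by
  intro n
  induction n with
  | zero => intro h hh; simp
  | succ n ih =>
      intro h hh
      rw [Function.iterate_succ_apply, opB_exp_mul w s hs h (hh.differentiable (by simp)),
        ih (fun t => -deriv h t) ((contDiff_infty_iff_deriv.mp hh).2.neg)]
      funext t
      rw [show iteratedDeriv n (fun t => -deriv h t) t = -iteratedDeriv n (deriv h) t from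
        iteratedDeriv_neg n (deriv h) t, ← iteratedDeriv_succ']
      ring

lemma iteratedDeriv_G (k : ℝ) : ∀ (n : ℕ) (x : ℝ),
    iteratedDeriv n (fun t : ℝ => Complex.exp (-((t : ℂ) ^ 2 / 2 + (k : ℂ) * t))) x
      = (((-1 : ℝ) ^ n * Real.exp (k ^ 2 / 2) * ((He n).eval (x + k) * W (x + k)) : ℝ) : ℂ) := by
  intro n
  induction n with
  | zero =>
      intro x
      rw [iteratedDeriv_zero,
        show -((x : ℂ) ^ 2 / 2 + (k : ℂ) * x) = ((-(x ^ 2 / 2 + k * x) : ℝ) : ℂ) by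
          push_cast; ring,
        ← Complex.ofReal_exp]
      norm_cast
      simp only [He, eval_one, pow_zero, one_mul, W]
      push_cast
      rw [one_mul, ← Real.exp_add]
      congr 1
      ring
  | succ n ih =>
      intro x
      rw [iteratedDeriv_succ, funext ih]
      have h1 : HasDerivAt (fun y : ℝ => (He n).eval (y + k) * W (y + k))
          (-((He (n + 1)).eval (x + k) * W (x + k))) x := by
        have h := (hasDerivAt_HeW n (x + k)).comp x ((hasDerivAt_id x).add_const k)
        simpa [Function.comp_def] using h
      have hr := (h1.const_mul ((-1 : ℝ) ^ n * Real.exp (k ^ 2 / 2))).ofReal_comp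
      rw [hr.deriv]
      push_cast
      ring


/-- The reduced Gaussian factor. -/
def Gfun (k : ℝ) : ℝ → ℂ := fun t => Complex.exp (-((t : ℂ) ^ 2 / 2 + (k : ℂ) * t))

lemma Gsm (k : ℝ) : ContDiff ℝ ∞ (Gfun k) := by
  have hco : ContDiff ℝ ∞ (fun t : ℝ => (t : ℂ)) := Complex.ofRealCLM.contDiff
  exact ((((hco.pow 2).div_const 2).add (contDiff_const.mul hco)).neg).cexp

lemma iterG' (k : ℝ) (j : ℕ) (x : ℝ) :
    (-1 : ℂ) ^ j * iteratedDeriv j (Gfun k) x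
      = ((Real.exp (k ^ 2 / 2) * ((He j).eval (x + k) * W (x + k)) : ℝ) : ℂ) := by
  rw [show Gfun k = fun t : ℝ => Complex.exp (-((t : ℂ) ^ 2 / 2 + (k : ℂ) * t)) from rfl,
    iteratedDeriv_G k j x]
  have hsq : ((-1 : ℂ)) ^ j * ((-1 : ℂ)) ^ j = 1 := by
    rw [← mul_pow]; norm_num
  push_cast
  linear_combination (Complex.exp ((k : ℂ) ^ 2 / 2) *
    ((((He j).eval (x + k) : ℝ) : ℂ) * ((W (x + k) : ℝ) : ℂ))) * hsq

/-- `φ_n = (1/√n!) Bⁿ φ₀` with `φ₀ = N_φ e^{-s_A}`. -/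
def pbPhi (wB sA : ℝ → ℂ) (Nφ : ℂ) (n : ℕ) : ℝ → ℂ :=
  fun x => (1 / (Real.sqrt n.factorial : ℂ)) *
    ((opB wB)^[n] (fun t => Nφ * Complex.exp (-sA t)) x)

/-- `Ψ_n = (1/√n!) (A†)ⁿ Ψ₀` with `Ψ₀ = N_Ψ e^{-conj s_B}`. -/
def pbPsi (wA sB : ℝ → ℂ) (NΨ : ℂ) (n : ℕ) : ℝ → ℂ :=
  fun x => (1 / (Real.sqrt n.factorial : ℂ)) *
    ((opAdag wA)^[n] (fun t => NΨ * Complex.exp (-(starRingEnd ℂ) (sB t))) x)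

theorem stmt5 (k : ℝ) (wA wB sA sB : ℝ → ℂ) (Nφ NΨ : ℂ)
    (hwA : ContDiff ℝ (⊤ : ℕ∞) wA) (hwB : ContDiff ℝ (⊤ : ℕ∞) wB)
    (hsum : ∀ x : ℝ, wA x + wB x = (x : ℂ) + (k : ℂ))
    (hsA : ∀ x : ℝ, HasDerivAt sA (wA x) x)
    (hsB : ∀ x : ℝ, HasDerivAt sB (wB x) x)
    (hnorm : ∀ x : ℝ, sA x + sB x = (x : ℂ) ^ 2 / 2 + (k : ℂ) * (x : ℂ))
    (hNφ : Nφ ≠ 0) (hNΨ : NΨ ≠ 0)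
    (hN : Nφ * (starRingEnd ℂ) NΨ
      = Complex.exp (-(k : ℂ) ^ 2 / 2) / (Real.sqrt (2 * Real.pi) : ℂ)) :
    ∀ n m : ℕ,
      Integrable (fun x : ℝ =>
        pbPhi wB sA Nφ n x * (starRingEnd ℂ) (pbPsi wA sB NΨ m x)) ∧
      (∫ x : ℝ, (starRingEnd ℂ) (pbPsi wA sB NΨ m x) * pbPhi wB sA Nφ n x)
        = if n = m then 1 else 0 := by
  intro n m
  have hφ0 : (fun t : ℝ => Nφ * Complex.exp (-sA t))
      = fun t => Complex.exp (sB t) * (Nφ * Gfun k t) := by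
    funext t
    rw [show -sA t = sB t + -((t : ℂ) ^ 2 / 2 + (k : ℂ) * t) from by linear_combination - hnorm t,
      Complex.exp_add]
    show _ = Complex.exp (sB t) * (Nφ * Complex.exp (-((t : ℂ) ^ 2 / 2 + (k : ℂ) * t)))
    ring
  have hphi : ∀ x : ℝ, pbPhi wB sA Nφ n x
      = (1 / (Real.sqrt n.factorial : ℂ)) * (Complex.exp (sB x) *
          (Nφ * ((Real.exp (k ^ 2 / 2) * ((He n).eval (x + k) * W (x + k)) : ℝ) : ℂ))) := by
    intro x
    show (1 / (Real.sqrt n.factorial : ℂ)) * ((opB wB)^[n] (fun t => Nφ * Complex.exp (-sA t)) x)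
        = _
    rw [hφ0, iter_opB wB sB hsB n (fun t => Nφ * Gfun k t) (contDiff_const.mul (Gsm k))]
    rw [show ((fun t => Complex.exp (sB t) * ((-1 : ℂ) ^ n *
        iteratedDeriv n (fun t => Nφ * Gfun k t) t)) x) = Complex.exp (sB x) * ((-1 : ℂ) ^ n *
        iteratedDeriv n (fun t => Nφ * Gfun k t) x) from rfl]
    rw [iteratedDeriv_cmul Nφ n (Gfun k) (Gsm k) x, mul_left_comm ((-1 : ℂ) ^ n) Nφ, iterG' k n x]
  have hΨ0 : (fun t : ℝ => (starRingEnd ℂ) (NΨ * Complex.exp (-(starRingEnd ℂ) (sB t))))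
      = fun t => Complex.exp (sA t) * ((starRingEnd ℂ) NΨ * Gfun k t) := by
    funext t
    rw [map_mul, ← Complex.exp_conj, map_neg, Complex.conj_conj]
    rw [show -sB t = sA t + -((t : ℂ) ^ 2 / 2 + (k : ℂ) * t) from by linear_combination - hnorm t,
      Complex.exp_add]
    show _ = Complex.exp (sA t) * ((starRingEnd ℂ) NΨ * Complex.exp (-((t : ℂ) ^ 2 / 2 + (k : ℂ) * t)))
    ring
  have hpsi : ∀ x : ℝ, (starRingEnd ℂ) (pbPsi wA sB NΨ m x)
      = (1 / (Real.sqrt m.factorial : ℂ)) * (Complex.exp (sA x) *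
          ((starRingEnd ℂ) NΨ *
            ((Real.exp (k ^ 2 / 2) * ((He m).eval (x + k) * W (x + k)) : ℝ) : ℂ))) := by
    intro x
    show (starRingEnd ℂ) ((1 / (Real.sqrt m.factorial : ℂ)) *
        ((opAdag wA)^[m] (fun t => NΨ * Complex.exp (-(starRingEnd ℂ) (sB t))) x)) = _
    rw [map_mul, conj_iter wA m _ x,
      show (starRingEnd ℂ) (1 / (Real.sqrt m.factorial : ℂ))
        = (1 / (Real.sqrt m.factorial : ℂ)) from by simp,
      hΨ0, iter_opB wA sA hsA m (fun t => (starRingEnd ℂ) NΨ * Gfun k t)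
        (contDiff_const.mul (Gsm k))]
    rw [show ((fun t => Complex.exp (sA t) * ((-1 : ℂ) ^ m *
        iteratedDeriv m (fun t => (starRingEnd ℂ) NΨ * Gfun k t) t)) x)
        = Complex.exp (sA x) * ((-1 : ℂ) ^ m *
          iteratedDeriv m (fun t => (starRingEnd ℂ) NΨ * Gfun k t) x) from rfl]
    rw [iteratedDeriv_cmul ((starRingEnd ℂ) NΨ) m (Gfun k) (Gsm k) x,
      mul_left_comm ((-1 : ℂ) ^ m) ((starRingEnd ℂ) NΨ), iterG' k m x]
  have hfac : (0 : ℝ) < Real.sqrt n.factorial * Real.sqrt m.factorial * Real.sqrt (2 * Real.pi) := by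
    have h1 : (0 : ℝ) < n.factorial := by exact_mod_cast n.factorial_pos
    have h2 : (0 : ℝ) < m.factorial := by exact_mod_cast m.factorial_pos
    positivity
  set c : ℝ := (Real.sqrt n.factorial * Real.sqrt m.factorial * Real.sqrt (2 * Real.pi))⁻¹ with hc
  have key : ∀ x : ℝ, pbPhi wB sA Nφ n x * (starRingEnd ℂ) (pbPsi wA sB NΨ m x)
      = ((c * ((He n).eval (x + k) * ((He m).eval (x + k) * W (x + k))) : ℝ) : ℂ) := by
    intro x
    rw [hphi x, hpsi x]
    have e1 : Complex.exp (sB x) * Complex.exp (sA x) = ((Real.exp (x ^ 2 / 2 + k * x) : ℝ) : ℂ) := by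
      rw [← Complex.exp_add, show sB x + sA x = (((x ^ 2 / 2 + k * x : ℝ)) : ℂ) from by
        rw [add_comm, hnorm x]; push_cast; ring, Complex.ofReal_exp]
    have e2 : Nφ * (starRingEnd ℂ) NΨ
        = ((Real.exp (-(k ^ 2) / 2) / Real.sqrt (2 * Real.pi) : ℝ) : ℂ) := by
      rw [hN, show (-(k : ℂ) ^ 2 / 2) = ((-(k ^ 2) / 2 : ℝ) : ℂ) from by push_cast; ring,
        ← Complex.ofReal_exp, Complex.ofReal_div]
    rw [show (1 / (Real.sqrt n.factorial : ℂ) * (Complex.exp (sB x) *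
        (Nφ * ((Real.exp (k ^ 2 / 2) * ((He n).eval (x + k) * W (x + k)) : ℝ) : ℂ)))) *
        (1 / (Real.sqrt m.factorial : ℂ) * (Complex.exp (sA x) *
        ((starRingEnd ℂ) NΨ * ((Real.exp (k ^ 2 / 2) * ((He m).eval (x + k) * W (x + k)) : ℝ) : ℂ))))
        = (Nφ * (starRingEnd ℂ) NΨ) * (Complex.exp (sB x) * Complex.exp (sA x)) *
          (1 / (Real.sqrt n.factorial : ℂ) * (1 / (Real.sqrt m.factorial : ℂ) *
            (((Real.exp (k ^ 2 / 2) * ((He n).eval (x + k) * W (x + k)) : ℝ) : ℂ) *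
             ((Real.exp (k ^ 2 / 2) * ((He m).eval (x + k) * W (x + k)) : ℝ) : ℂ)))) from by ring,
      e1, e2]
    have E : Real.exp (-(k ^ 2) / 2) * (Real.exp (x ^ 2 / 2 + k * x) * (Real.exp (k ^ 2 / 2) *
        (Real.exp (k ^ 2 / 2) * (W (x + k) * W (x + k))))) = W (x + k) := by
      simp only [W, ← Real.exp_add]
      congr 1
      ring
    norm_cast
    rw [hc]
    linear_combination ((He n).eval (x + k) * (He m).eval (x + k) /
      (Real.sqrt n.factorial * Real.sqrt m.factorial * Real.sqrt (2 * Real.pi))) * E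
  have hFi : Integrable (fun x : ℝ =>
      c * ((He n).eval (x + k) * ((He m).eval (x + k) * W (x + k)))) := by
    exact ((integrable_poly2_W (He n) (He m)).comp_add_right k).const_mul c
  constructor
  · exact (hFi.ofReal (𝕜 := ℂ)).congr (Filter.Eventually.of_forall fun x => (key x).symm)
  · rw [show (∫ x : ℝ, (starRingEnd ℂ) (pbPsi wA sB NΨ m x) * pbPhi wB sA Nφ n x)
        = ∫ x : ℝ, ((c * ((He n).eval (x + k) * ((He m).eval (x + k) * W (x + k))) : ℝ) : ℂ) from by
        congr 1; funext x; rw [mul_comm]; exact key x]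
    have hcast : (∫ x : ℝ, ((c * ((He n).eval (x + k) * ((He m).eval (x + k) * W (x + k))) : ℝ) : ℂ))
        = (((∫ x : ℝ, c * ((He n).eval (x + k) * ((He m).eval (x + k) * W (x + k)))) : ℝ) : ℂ) := by
      calc (∫ x : ℝ, ((c * ((He n).eval (x + k) * ((He m).eval (x + k) * W (x + k))) : ℝ) : ℂ))
          = ∫ x : ℝ, Complex.ofRealCLM
              (c * ((He n).eval (x + k) * ((He m).eval (x + k) * W (x + k)))) := by
            simp [Complex.ofRealCLM_apply]
        _ = Complex.ofRealCLM
              (∫ x : ℝ, c * ((He n).eval (x + k) * ((He m).eval (x + k) * W (x + k)))) :=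
            ContinuousLinearMap.integral_comp_comm _ hFi
        _ = _ := rfl
    rw [hcast, integral_const_mul,
      integral_add_right_eq_self (fun y : ℝ => (He n).eval y * ((He m).eval y * W y)) k,
      He_ortho n m]
    by_cases hnm : n = m
    · subst hnm
      simp only [eq_self_iff_true, if_true, hc]
      have ha : Real.sqrt n.factorial * Real.sqrt n.factorial = n.factorial :=
        Real.mul_self_sqrt (by positivity)
      have h2π : Real.sqrt (2 * Real.pi) ≠ 0 := by positivity
      have hfa : (n.factorial : ℝ) ≠ 0 := by
        exact_mod_cast n.factorial_pos.ne'
      have : ((Real.sqrt n.factorial * Real.sqrt n.factorial * Real.sqrt (2 * Real.pi))⁻¹ *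
          (Real.sqrt (2 * Real.pi) * n.factorial) : ℝ) = 1 := by
        rw [ha]
        field_simp
      exact_mod_cast this
    · simp [hnm]


end
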